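/- Let X be a T1 space and f, g distinct nonzero zero divisors of C(X)_F with Z(f) ∪ Z(g) ≠ X and Z(f) ∩ Z(g) = ∅. Then the shortest cycle in Γ(C(X)_F) through both f and g has length 6: there is a cycle of length 6 containing f and g, and no cycle of length less than 6 contains both. -/

import Mathlib

open SimpleGraph

/-- `f` belongs to `C(X)_F` : it is continuous outside some finite set. -/
def CF (X : Type*) [TopologicalSpace X] (f : X → ℝ) : Prop :=
  ∃ F : Set X, F.Finite ∧ ContinuousOn f Fᶜ

/-- `f` is a nonzero zero divisor of the ring `C(X)_F`. -/
def ZD (X : Type*) [TopologicalSpace X] (f : X → ℝ) : Prop :=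
  CF X f ∧ f ≠ 0 ∧ ∃ g : X → ℝ, CF X g ∧ g ≠ 0 ∧ f * g = 0

/-- The vertex set of the zero divisor graph of `C(X)_F`. -/
def Vtx (X : Type*) [TopologicalSpace X] := {f : X → ℝ // ZD X f}

/-- The zero divisor graph `Γ(C(X)_F)`: vertices are the nonzero zero divisors,
`f` and `g` adjacent iff `f ≠ g` and `f * g = 0`. -/
def Γ (X : Type*) [TopologicalSpace X] : SimpleGraph (Vtx X) where
  Adj f g := f ≠ g ∧ (f.1 * g.1 = 0)
  symm := ⟨fun f g ⟨h1, h2⟩ => ⟨h1.symm, by rw [mul_comm] at h2; exact h2⟩⟩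
  loopless := ⟨fun f ⟨h, _⟩ => h rfl⟩

/-- The zero set of a function. -/
def Z {X : Type*} (f : X → ℝ) : Set X := {x | f x = 0}

/-- The characteristic function of a point. -/
noncomputable def chi {X : Type*} (x : X) : X → ℝ := Set.indicator {x} (fun _ => 1)

lemma chi_self {X : Type*} (x : X) : chi x x = 1 := by
  unfold chi; exact Set.indicator_of_mem (Set.mem_singleton x) (fun _ => (1:ℝ))

lemma chi_ne {X : Type*} {x z : X} (h : z ≠ x) : chi x z = 0 := by
  unfold chi; exact Set.indicator_of_notMem (by simpa using h) _

lemma mulz {X : Type*} (h k : X → ℝ) (H : ∀ z, h z = 0 ∨ k z = 0) : h * k = 0 := by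
  funext z
  rcases H z with h0 | h0 <;> simp [Pi.mul_apply, h0]

lemma CF_smul_chi {X : Type*} [TopologicalSpace X] [T1Space X] (c : ℝ) (x : X) :
    CF X (fun z => c * chi x z) := by
  refine ⟨{x}, Set.finite_singleton x, ?_⟩
  refine (continuousOn_const (c := (0:ℝ))).congr ?_
  intro z hz
  simp [chi_ne (show z ≠ x from hz)]

lemma ZD_smul_chi {X : Type*} [TopologicalSpace X] [T1Space X] {c : ℝ} (hc : c ≠ 0)
    {x y : X} (hxy : x ≠ y) : ZD X (fun z => c * chi x z) := by
  refine ⟨CF_smul_chi c x, ?_, fun z => 1 * chi y z, CF_smul_chi 1 y, ?_, ?_⟩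
  · intro h
    have := congrFun h x
    simp [chi_self] at this
    exact hc this
  · intro h
    have := congrFun h y
    simp [chi_self] at this
  · refine mulz _ _ fun z => ?_
    rcases eq_or_ne z x with rfl | hz
    · right; simp [chi_ne hxy]
    · left; simp [chi_ne hz]

lemma walk_three_le {X : Type*} [TopologicalSpace X] {f g : Vtx X} (hfg : f ≠ g)
    (hfgmul : f.1 * g.1 ≠ 0) (hI : Z f.1 ∩ Z g.1 = ∅) :
    ∀ w : (Γ X).Walk f g, 3 ≤ w.length := by
  intro w
  match w with
  | .nil => exact absurd rfl hfg
  | .cons h .nil => exact absurd h.2 hfgmul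
  | .cons (v := a) h (.cons h' .nil) =>
      exfalso
      obtain ⟨z, hz⟩ := Function.ne_iff.mp a.2.2.1
      simp only [Pi.zero_apply] at hz
      have h1 : f.1 z = 0 := by
        have := congrFun h.2 z
        simp only [Pi.mul_apply, Pi.zero_apply, mul_eq_zero] at this
        tauto
      have h2 : g.1 z = 0 := by
        have := congrFun h'.2 z
        simp only [Pi.mul_apply, Pi.zero_apply, mul_eq_zero] at this
        tauto
      have : z ∈ Z f.1 ∩ Z g.1 := ⟨h1, h2⟩
      rw [hI] at this
      exact this
  | .cons _ (.cons _ (.cons _ w')) =>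
      simp only [SimpleGraph.Walk.length_cons]
      omega

/-- For distinct vertices `f, g` of `Γ(C(X)_F)` with `Z(f) ∪ Z(g) ≠ X` and
`Z(f) ∩ Z(g) = ∅`, the smallest cycle through both `f` and `g` has length 6. -/
theorem stmt19 {X : Type*} [TopologicalSpace X] [T1Space X]
    (f g : Vtx X) (hfg : f ≠ g)
    (hU : Z f.1 ∪ Z g.1 ≠ Set.univ) (hI : Z f.1 ∩ Z g.1 = ∅) :
    (∃ c : (Γ X).Walk f f, c.IsCycle ∧ g ∈ c.support ∧ c.length = 6) ∧
      (∀ (v : Vtx X) (c : (Γ X).Walk v v), c.IsCycle →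
        f ∈ c.support → g ∈ c.support → 6 ≤ c.length) := by
  classical
  -- basic points and facts
  obtain ⟨w, hw⟩ := Set.ne_univ_iff_exists_notMem _ |>.mp hU
  simp only [Set.mem_union, Z, Set.mem_setOf_eq, not_or] at hw
  have hfgmul : f.1 * g.1 ≠ 0 := by
    intro h
    have := congrFun h w
    simp only [Pi.mul_apply, Pi.zero_apply, mul_eq_zero] at this
    tauto
  obtain ⟨_, _, p, _, hp0, hfp⟩ := f.2
  obtain ⟨x, hx⟩ := Function.ne_iff.mp hp0
  have hfx : f.1 x = 0 := by
    have := congrFun hfp x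
    simp only [Pi.mul_apply, Pi.zero_apply, mul_eq_zero] at this
    simpa using this.resolve_right (by simpa using hx)
  obtain ⟨_, _, q, _, hq0, hgq⟩ := g.2
  obtain ⟨y, hy⟩ := Function.ne_iff.mp hq0
  have hgy : g.1 y = 0 := by
    have := congrFun hgq y
    simp only [Pi.mul_apply, Pi.zero_apply, mul_eq_zero] at this
    simpa using this.resolve_right (by simpa using hy)
  have hgx : g.1 x ≠ 0 := by
    intro h
    have : x ∈ Z f.1 ∩ Z g.1 := ⟨hfx, h⟩
    rw [hI] at this; exact this
  have hfy : f.1 y ≠ 0 := by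
    intro h
    have : y ∈ Z f.1 ∩ Z g.1 := ⟨h, hgy⟩
    rw [hI] at this; exact this
  have hxy : x ≠ y := fun h => hgx (h ▸ hgy)
  have hyx : y ≠ x := hxy.symm
  have vne : ∀ (u v : Vtx X) (z : X), u.1 z ≠ v.1 z → u ≠ v := fun u v z h huv =>
    h (congrFun (congrArg Subtype.val huv) z)
  have fne : ∀ u : Vtx X, u.1 * g.1 = 0 → f ≠ u := fun u h0 hf' =>
    hfgmul (by rw [hf']; exact h0)
  have gne : ∀ u : Vtx X, u.1 * f.1 = 0 → g ≠ u := fun u h0 hg' =>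
    hfgmul (by rw [hg', mul_comm]; exact h0)
  constructor
  · -- the 6-cycle
    set a : Vtx X := ⟨fun z => 1 * chi x z, ZD_smul_chi one_ne_zero hxy⟩ with ha
    set b : Vtx X := ⟨fun z => 1 * chi y z, ZD_smul_chi one_ne_zero hyx⟩ with hb
    set d : Vtx X := ⟨fun z => 2 * chi y z, ZD_smul_chi two_ne_zero hyx⟩ with hd
    set e : Vtx X := ⟨fun z => 2 * chi x z, ZD_smul_chi two_ne_zero hxy⟩ with he
    have hax : a.1 x = 1 := by rw [ha]; simp [chi_self]
    have hay : a.1 y = 0 := by rw [ha]; simp [chi_ne hyx]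
    have hbx : b.1 x = 0 := by rw [hb]; simp [chi_ne hxy]
    have hby : b.1 y = 1 := by rw [hb]; simp [chi_self]
    have hdx : d.1 x = 0 := by rw [hd]; simp [chi_ne hxy]
    have hdy : d.1 y = 2 := by rw [hd]; simp [chi_self]
    have hex : e.1 x = 2 := by rw [he]; simp [chi_self]
    have hey : e.1 y = 0 := by rw [he]; simp [chi_ne hyx]
    -- products
    have pfa : f.1 * a.1 = 0 := mulz _ _ fun z => by
      rcases eq_or_ne z x with rfl | hz
      · exact Or.inl hfx
      · exact Or.inr (by rw [ha]; simp [chi_ne hz])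
    have pab : a.1 * b.1 = 0 := mulz _ _ fun z => by
      rcases eq_or_ne z y with rfl | hz
      · exact Or.inl hay
      · exact Or.inr (by rw [hb]; simp [chi_ne hz])
    have pbg : b.1 * g.1 = 0 := mulz _ _ fun z => by
      rcases eq_or_ne z y with rfl | hz
      · exact Or.inr hgy
      · exact Or.inl (by rw [hb]; simp [chi_ne hz])
    have pgd : g.1 * d.1 = 0 := mulz _ _ fun z => by
      rcases eq_or_ne z y with rfl | hz
      · exact Or.inl hgy
      · exact Or.inr (by rw [hd]; simp [chi_ne hz])
    have pde : d.1 * e.1 = 0 := mulz _ _ fun z => by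
      rcases eq_or_ne z y with rfl | hz
      · exact Or.inr hey
      · exact Or.inl (by rw [hd]; simp [chi_ne hz])
    have pef : e.1 * f.1 = 0 := mulz _ _ fun z => by
      rcases eq_or_ne z x with rfl | hz
      · exact Or.inr hfx
      · exact Or.inl (by rw [he]; simp [chi_ne hz])
    -- distinctness
    have nfa : f ≠ a := vne f a x (by rw [hfx, hax]; norm_num)
    have nab : a ≠ b := vne a b x (by rw [hax, hbx]; norm_num)
    have nag : a ≠ g := (gne a (by rw [mul_comm]; exact pfa)).symm
    have nad : a ≠ d := vne a d x (by rw [hax, hdx]; norm_num)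
    have nae : a ≠ e := vne a e x (by rw [hax, hex]; norm_num)
    have naf : a ≠ f := nfa.symm
    have nbg : b ≠ g := vne b g y (by rw [hby, hgy]; norm_num)
    have nbd : b ≠ d := vne b d y (by rw [hby, hdy]; norm_num)
    have nbe : b ≠ e := vne b e y (by rw [hby, hey]; norm_num)
    have nbf : b ≠ f := (fne b pbg).symm
    have ngd : g ≠ d := vne g d y (by rw [hgy, hdy]; norm_num)
    have nge : g ≠ e := gne e pef
    have ngf : g ≠ f := hfg.symm
    have nde : d ≠ e := vne d e y (by rw [hdy, hey]; norm_num)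
    have ndf : d ≠ f := (fne d (by rw [mul_comm]; exact pgd)).symm
    have nef : e ≠ f := vne e f x (by rw [hex, hfx]; norm_num)
    have nfb : f ≠ b := nbf.symm
    have nfd : f ≠ d := ndf.symm
    have nfe : f ≠ e := nef.symm
    -- adjacencies
    have h1 : (Γ X).Adj f a := ⟨nfa, pfa⟩
    have h2 : (Γ X).Adj a b := ⟨nab, pab⟩
    have h3 : (Γ X).Adj b g := ⟨nbg, pbg⟩
    have h4 : (Γ X).Adj g d := ⟨ngd, pgd⟩
    have h5 : (Γ X).Adj d e := ⟨nde, pde⟩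
    have h6 : (Γ X).Adj e f := ⟨nef, pef⟩
    refine ⟨.cons h1 (.cons h2 (.cons h3 (.cons h4 (.cons h5 (.cons h6 .nil))))), ?_, ?_, rfl⟩
    · rw [SimpleGraph.Walk.cons_isCycle_iff]
      constructor
      · rw [SimpleGraph.Walk.isPath_def]
        simp only [SimpleGraph.Walk.support_cons, SimpleGraph.Walk.support_nil,
          List.nodup_cons, List.mem_cons, List.mem_singleton, List.not_mem_nil,
          not_or, List.nodup_nil, and_true]
        tauto
      · simp only [SimpleGraph.Walk.edges_cons, SimpleGraph.Walk.edges_nil,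
          List.mem_cons, List.not_mem_nil, or_false, Sym2.eq, Sym2.rel_iff',
          Prod.mk.injEq, Prod.swap_prod_mk, not_or]
        tauto
    · simp
  · -- lower bound
    intro v c hc hf hg
    have hgt : g ∈ c.support.tail := by
      rcases SimpleGraph.Walk.mem_support_iff _ |>.mp hg with rfl | h
      · obtain ⟨u, ha, r, rfl⟩ := SimpleGraph.Walk.not_nil_iff.mp hc.not_nil
        simpa using r.end_mem_support
      · exact h
    have hg' : g ∈ (c.rotate f hf).support := by
      apply SimpleGraph.Walk.mem_support_iff _ |>.mpr
      right
      exact ((SimpleGraph.Walk.support_rotate c f hf).mem_iff).mpr hgt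
    have hlen : (c.rotate f hf).length = c.length := by
      have h1 := congrArg SimpleGraph.Walk.length (c.take_spec hf)
      rw [SimpleGraph.Walk.length_append] at h1
      have h2 : (c.rotate f hf).length
          = (c.dropUntil f hf).length + (c.takeUntil f hf).length := by
        rw [SimpleGraph.Walk.rotate, SimpleGraph.Walk.length_append]
      omega
    set c' := c.rotate f hf with hc'def
    have hsp := congrArg SimpleGraph.Walk.length (c'.take_spec hg')
    rw [SimpleGraph.Walk.length_append] at hsp
    have l1 := walk_three_le hfg hfgmul hI (c'.takeUntil g hg')
    have l2 := walk_three_le hfg hfgmul hI ((c'.dropUntil g hg').reverse)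
    rw [SimpleGraph.Walk.length_reverse] at l2
    omega
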